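/- (Euler's original identity defining the Eulerian polynomials.) For every natural number n ≥ 1, in the ring of formal power series over ℤ: ( the series whose coefficient of X^k is k^n ) · (1 − X)^{n+1} = X · ∑_{k=0}^{n−1} A(n,k) · X^{k}. -/

import Mathlib

/-- Number of descents of a permutation of `Fin (m+1)`: indices `i ≤ m-1` with `σ i > σ (i+1)`. -/
def descentCount {m : ℕ} (σ : Equiv.Perm (Fin (m + 1))) : ℕ :=
  (Finset.univ.filter fun i : Fin m => σ i.succ < σ i.castSucc).card

/-- The Eulerian number `A(n,k)`: number of permutations of `Fin n` with exactly `k` descents. -/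
def eulerian (n k : ℕ) : ℕ :=
  match n with
  | 0 => if k = 0 then 1 else 0
  | m + 1 => Fintype.card {σ : Equiv.Perm (Fin (m + 1)) // descentCount σ = k}

namespace EulerAux

variable {α : Type*} [LinearOrder α]

/-- descent count of a list -/
def des : List α → ℕ
  | [] => 0
  | [_] => 0
  | a :: b :: t => des (b :: t) + (if b < a then 1 else 0)

lemma des_cons_cons (a b : α) (t : List α) :
    des (a :: b :: t) = des (b :: t) + (if b < a then 1 else 0) := rfl

lemma des_top_cons {M a : α} (t : List α) (h : a < M) :
    des (M :: a :: t) = des (a :: t) + 1 := by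
  simp [des_cons_cons, h]

lemma des_insertIdx_or (M : α) :
    ∀ (l : List α), (∀ x ∈ l, x < M) → ∀ p, p ≤ l.length →
      des (l.insertIdx p M) = des l ∨ des (l.insertIdx p M) = des l + 1
  | [], _, p, hp => by
      have : p = 0 := Nat.le_zero.mp hp
      subst this
      left; rfl
  | a :: t, hM, 0, _ => by
      right
      rw [List.insertIdx_zero]
      exact des_top_cons _ (hM a (by simp))
  | a :: t, hM, p + 1, hp => by
      rw [List.insertIdx_succ_cons]
      match t, hM, hp with
      | [], hM, hp =>
        have : p = 0 := by simpa using hp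
        subst this
        left
        have : ¬ (M < a) := not_lt.mpr (hM a (by simp)).le
        simp [des, this]
      | b :: t', hM, hp =>
        have hM' : ∀ x ∈ b :: t', x < M := fun x hx => hM x (by simp [hx])
        cases p with
        | zero =>
          rw [List.insertIdx_zero]
          have h1 : ¬ (M < a) := not_lt.mpr (hM a (by simp)).le
          rw [des_cons_cons a M, des_top_cons t' (hM b (by simp)), if_neg h1,
            des_cons_cons a b]
          rcases le_or_gt a b with h | h
          · right; simp [not_lt.mpr h]
          · left; simp [h]
        | succ r =>
          rw [List.insertIdx_succ_cons]
          have hr : r + 1 ≤ (b :: t').length := by simpa using hp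
          have := des_insertIdx_or M (b :: t') hM' (r + 1) hr
          rw [List.insertIdx_succ_cons] at this
          rw [des_cons_cons a b, des_cons_cons a]
          rcases this with h | h
          · left; rw [h]
          · right; rw [h]; ring

lemma sum_des_insertIdx (M : α) :
    ∀ (l : List α), (∀ x ∈ l, x < M) →
      (∑ p ∈ Finset.range (l.length + 1),
        if des (l.insertIdx p M) = des l then 1 else 0) = des l + 1
  | [], _ => by
      rw [show ([] : List α).length + 1 = 1 from rfl, Finset.sum_range_one]
      simp [des]
  | [a], hM => by
      have h1 : ¬ (M < a) := not_lt.mpr (hM a (by simp)).le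
      have e0 : [a].insertIdx 0 M = [M, a] := rfl
      have e1 : [a].insertIdx 1 M = [a, M] := rfl
      have h2 : a < M := hM a (by simp)
      rw [show ([a] : List α).length + 1 = 2 from rfl, Finset.sum_range_succ,
        Finset.sum_range_one, e0, e1]
      simp [des, h1, h2]
  | a :: b :: t, hM => by
      have hM' : ∀ x ∈ b :: t, x < M := fun x hx => hM x (by simp [hx])
      have hab : ¬ (M < a) := not_lt.mpr (hM a (by simp)).le
      have IH := sum_des_insertIdx M (b :: t) hM'
      rw [Finset.sum_range_succ'] at IH
      have hT0 : des ((b :: t).insertIdx 0 M) ≠ des (b :: t) := by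
        rw [List.insertIdx_zero, des_top_cons t (hM' b (by simp))]
        omega
      rw [if_neg hT0, add_zero] at IH
      rw [Finset.sum_range_succ']
      have h0 : des ((a :: b :: t).insertIdx 0 M) ≠ des (a :: b :: t) := by
        rw [List.insertIdx_zero, des_top_cons _ (hM a (by simp))]
        omega
      rw [if_neg h0, add_zero]
      have hlen : (a :: b :: t).length = (b :: t).length + 1 := rfl
      rw [hlen, Finset.sum_range_succ']
      have e1 : (a :: b :: t).insertIdx 1 M = a :: M :: b :: t := rfl
      set c : ℕ := if b < a then 1 else 0 with hc
      have h1 : des ((a :: b :: t).insertIdx (0 + 1) M) = des (b :: t) + 1 := by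
        rw [zero_add, e1, des_cons_cons a M, des_top_cons t (hM' b (by simp)), if_neg hab,
          add_zero]
      have hdl : des (a :: b :: t) = des (b :: t) + c := rfl
      have key : ∀ q, ((a :: b :: t).insertIdx (q + 1 + 1) M) = a :: ((b :: t).insertIdx (q+1) M) := by
        intro q; rw [List.insertIdx_succ_cons]
      have keydes : ∀ q, des ((a :: b :: t).insertIdx (q + 1 + 1) M)
          = des ((b :: t).insertIdx (q+1) M) + c := by
        intro q
        rw [key q, List.insertIdx_succ_cons, des_cons_cons a b, hc]
      calc (∑ q ∈ Finset.range (b :: t).length,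
              if des ((a :: b :: t).insertIdx (q + 1 + 1) M) = des (a :: b :: t) then 1 else 0)
            + (if des ((a :: b :: t).insertIdx (0 + 1) M) = des (a :: b :: t) then 1 else 0)
          = (∑ q ∈ Finset.range (b :: t).length,
              if des ((b :: t).insertIdx (q + 1) M) = des (b :: t) then 1 else 0)
            + (if des (b :: t) + 1 = des (b :: t) + c then 1 else 0) := by
            rw [h1, hdl]
            congr 1
            refine Finset.sum_congr rfl fun q _ => ?_
            rw [keydes q]
            exact if_congr (by omega) rfl rfl
      _ = des (a :: b :: t) + 1 := by
            rw [IH, hdl]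
            by_cases hb : b < a
            · simp [hc, hb]
            · simp [hc, hb]

lemma sum_des_insertIdx_eq (M : α) (l : List α) (hM : ∀ x ∈ l, x < M) (k : ℕ) :
    (∑ p ∈ Finset.range (l.length + 1), if des (l.insertIdx p M) = k then 1 else 0)
      = (if k = des l then des l + 1 else 0)
        + (if k = des l + 1 then l.length - des l else 0) := by
  have htot : (∑ p ∈ Finset.range (l.length + 1),
      ((if des (l.insertIdx p M) = des l then 1 else 0)
        + (if des (l.insertIdx p M) = des l + 1 then 1 else 0))) = l.length + 1 := by
    have e : ∀ p ∈ Finset.range (l.length + 1),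
        ((if des (l.insertIdx p M) = des l then 1 else 0)
          + (if des (l.insertIdx p M) = des l + 1 then 1 else 0)) = 1 := by
      intro p hp
      rcases des_insertIdx_or M l hM p (Nat.lt_succ_iff.mp (Finset.mem_range.mp hp)) with h | h
      · simp [h]
      · rw [h]; simp
    rw [Finset.sum_congr rfl e]
    simp
  rw [Finset.sum_add_distrib, sum_des_insertIdx M l hM] at htot
  rcases eq_or_ne k (des l) with rfl | h1
  · rw [sum_des_insertIdx M l hM, if_pos rfl, if_neg (by omega), add_zero]
  rcases eq_or_ne k (des l + 1) with rfl | h2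
  · rw [if_neg h1, if_pos rfl, zero_add]
    omega
  · rw [if_neg h1, if_neg h2, add_zero]
    refine Finset.sum_eq_zero fun p hp => ?_
    rcases des_insertIdx_or M l hM p (Nat.lt_succ_iff.mp (Finset.mem_range.mp hp)) with h | h
    · rw [h, if_neg (Ne.symm h1)]
    · rw [h, if_neg (Ne.symm h2)]

lemma des_map {β : Type*} [LinearOrder β] (f : α → β) (hf : StrictMono f) :
    ∀ l : List α, des (l.map f) = des l
  | [] => rfl
  | [_] => rfl
  | a :: b :: t => by
      have := des_map f hf (b :: t)
      simp only [List.map_cons] at this ⊢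
      show des (f b :: (t.map f)) + (if f b < f a then 1 else 0)
          = des (b :: t) + (if b < a then 1 else 0)
      rw [show des (f b :: t.map f) = des (b :: t) from this]
      simp only [hf.lt_iff_lt]

lemma des_ofFn : ∀ (m : ℕ) (f : Fin (m + 1) → α),
    des (List.ofFn f) = (Finset.univ.filter fun i : Fin m => f i.succ < f i.castSucc).card
  | 0, f => by simp [List.ofFn_succ, des]
  | m + 1, f => by
      have IH := des_ofFn m (fun i => f i.succ)
      rw [List.ofFn_succ, List.ofFn_succ]
      show des (f 0 :: (fun i : Fin (m+1) => f i.succ) 0 :: _) = _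
      rw [show des (f 0 :: (fun i : Fin (m+1) => f i.succ) 0 :: (List.ofFn fun i : Fin m => f i.succ.succ))
          = des ((fun i : Fin (m+1) => f i.succ) 0 :: (List.ofFn fun i : Fin m => f i.succ.succ))
            + (if f (0:Fin (m+1)).succ < f 0 then 1 else 0) from rfl]
      rw [← List.ofFn_succ (f := fun i : Fin (m+1) => f i.succ), IH]
      have : ∀ (p : Fin (m+1) → Prop) [DecidablePred p],
          (Finset.univ.filter p).card
            = (Finset.univ.filter fun i : Fin m => p i.succ).card + (if p 0 then 1 else 0) := by
        intro p _
        rw [Finset.card_filter, Finset.card_filter, Fin.sum_univ_succ, add_comm]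
      rw [this (fun i : Fin (m + 1) => f i.succ < f i.castSucc)]
      have e2 : (Finset.filter (fun i : Fin m => f i.succ.succ < f i.succ.castSucc) Finset.univ)
          = (Finset.filter (fun i : Fin m => f i.succ.succ < f i.castSucc.succ) Finset.univ) := by
        refine Finset.filter_congr fun i _ => ?_
        rw [Fin.succ_castSucc]
      rw [e2, show ((0 : Fin (m+1)).castSucc) = 0 from rfl]

/-- The finset of lists arising from permutations. -/
def S (n : ℕ) : Finset (List (Fin n)) :=
  Finset.univ.image fun σ : Equiv.Perm (Fin n) => List.ofFn σ

lemma ofFn_perm_inj (n : ℕ) :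
    Function.Injective fun σ : Equiv.Perm (Fin n) => List.ofFn ⇑σ := fun _ _ h =>
  Equiv.coe_fn_injective (List.ofFn_injective h)

lemma card_S (n : ℕ) : (S n).card = n.factorial := by
  rw [S, Finset.card_image_of_injective _ (ofFn_perm_inj n), Finset.card_univ,
    Fintype.card_perm, Fintype.card_fin]

lemma mem_S {n : ℕ} {l : List (Fin n)} : l ∈ S n ↔ l.Nodup ∧ l.length = n := by
  constructor
  · rintro hl
    obtain ⟨σ, -, rfl⟩ := Finset.mem_image.mp hl
    exact ⟨List.nodup_ofFn.mpr σ.injective, List.length_ofFn⟩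
  · rintro ⟨hnd, hlen⟩
    have hinj : Function.Injective fun i : Fin n => l.get (Fin.cast hlen.symm i) :=
      (List.nodup_iff_injective_get.mp hnd).comp fun i j h => by
        simpa [Fin.ext_iff] using h
    have hbij := (Finite.injective_iff_bijective).mp hinj
    refine Finset.mem_image.mpr ⟨Equiv.ofBijective _ hbij, Finset.mem_univ _, ?_⟩
    apply List.ext_get (by simp [hlen])
    intro i h1 h2
    simp [Equiv.ofBijective]

section Rec
variable (m : ℕ)

/-- insertion map -/
def phi (lp : List (Fin (m + 1)) × ℕ) : List (Fin (m + 2)) :=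
  (lp.1.map Fin.castSucc).insertIdx lp.2 (Fin.last (m + 1))

def T : Finset (List (Fin (m + 1)) × ℕ) := S (m + 1) ×ˢ Finset.range (m + 2)

lemma length_of_mem_T {lp : List (Fin (m+1)) × ℕ} (h : lp ∈ T m) :
    (lp.1.map Fin.castSucc).length = m + 1 ∧ lp.2 ≤ m + 1 := by
  obtain ⟨h1, h2⟩ := Finset.mem_product.mp h
  rw [List.length_map, (mem_S.mp h1).2]
  exact ⟨rfl, Nat.lt_succ_iff.mp (Finset.mem_range.mp h2)⟩

lemma last_not_mem {l : List (Fin (m+1))} : Fin.last (m+1) ∉ l.map Fin.castSucc := by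
  simp only [List.mem_map, not_exists, not_and]
  intro x _
  exact (Fin.castSucc_lt_last x).ne

lemma phi_mem {lp : List (Fin (m+1)) × ℕ} (h : lp ∈ T m) : phi m lp ∈ S (m + 2) := by
  obtain ⟨hlen, hp⟩ := length_of_mem_T m h
  obtain ⟨h1, -⟩ := Finset.mem_product.mp h
  obtain ⟨hnd, -⟩ := mem_S.mp h1
  have hple : lp.2 ≤ (lp.1.map Fin.castSucc).length := le_of_le_of_eq hp hlen.symm
  have hperm := List.perm_insertIdx (Fin.last (m+1)) (lp.1.map Fin.castSucc) hple
  rw [phi]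
  refine mem_S.mpr ⟨hperm.nodup_iff.mpr ?_, ?_⟩
  · exact List.nodup_cons.mpr ⟨last_not_mem m, hnd.map (Fin.castSucc_injective _)⟩
  · rw [List.length_insertIdx_of_le_length hple, hlen]

lemma phi_injOn : Set.InjOn (phi m) (T m) := by
  rintro ⟨l, p⟩ h ⟨l', p'⟩ h' heq
  obtain ⟨hlen, hp⟩ := length_of_mem_T m h
  obtain ⟨hlen', hp'⟩ := length_of_mem_T m h'
  have key : ∀ (u u' : List (Fin (m+2))) (q q' : ℕ), q ≤ u.length → q' ≤ u'.length →
      Fin.last (m+1) ∉ u' → q < q' →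
      u.insertIdx q (Fin.last (m+1)) ≠ u'.insertIdx q' (Fin.last (m+1)) := by
    intro u u' q q' hq hq' hmem hlt heq
    have hb1 : q < (u.insertIdx q (Fin.last (m+1))).length := by
      rw [List.length_insertIdx_of_le_length hq]; omega
    have hb2 : q < u'.length := by omega
    have e1 : (u.insertIdx q (Fin.last (m+1)))[q]'hb1 = Fin.last (m+1) :=
      List.getElem_insertIdx_self hb1
    have e2 : (u'.insertIdx q' (Fin.last (m+1)))[q]'(by rw [List.length_insertIdx_of_le_length hq']; omega)
        = u'[q]'hb2 := List.getElem_insertIdx_of_lt hlt _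
    simp only [heq] at e1
    rw [e2] at e1
    exact hmem (e1 ▸ List.getElem_mem hb2)
  have hpp : p = p' := by
    by_contra hne
    rcases Nat.lt_or_ge p p' with hlt | hge
    · exact key _ _ _ _ (le_of_le_of_eq hp hlen.symm) (le_of_le_of_eq hp' hlen'.symm)
        (last_not_mem m) hlt heq
    · exact key _ _ _ _ (le_of_le_of_eq hp' hlen'.symm) (le_of_le_of_eq hp hlen.symm)
        (last_not_mem m) (lt_of_le_of_ne hge (Ne.symm hne)) heq.symm
  subst hpp
  have hl : l = l' := by
    have := List.insertIdx_injective p (Fin.last (m+1)) heq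
    exact List.map_injective_iff.mpr (Fin.castSucc_injective _) this
  rw [hl]

lemma image_phi : (T m).image (phi m) = S (m + 2) := by
  refine Finset.eq_of_subset_of_card_le (fun L hL => ?_) ?_
  · obtain ⟨lp, hlp, rfl⟩ := Finset.mem_image.mp hL
    exact phi_mem m hlp
  · rw [Finset.card_image_of_injOn (phi_injOn m), card_S, T, Finset.card_product,
      Finset.card_range, card_S]
    rw [Nat.factorial_succ (m+1)]
    ring_nf
    omega

lemma card_filter_S (k : ℕ) :
    ((S (m + 2)).filter fun L => des L = k).card
      = ∑ l ∈ S (m + 1), ∑ p ∈ Finset.range (m + 2),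
          (if des (phi m (l, p)) = k then 1 else 0) := by
  rw [← image_phi, Finset.filter_image,
    Finset.card_image_of_injOn ((phi_injOn m).mono (by
      intro x hx
      exact Finset.mem_coe.mpr (Finset.filter_subset _ _ hx))),
    Finset.card_filter, T, Finset.sum_product]

lemma inner_sum (l : List (Fin (m + 1))) (hl : l ∈ S (m + 1)) (k : ℕ) :
    (∑ p ∈ Finset.range (m + 2), (if des (phi m (l, p)) = k then 1 else 0))
      = (if des l = k then k + 1 else 0)
        + (if des l + 1 = k then (m + 1) - des l else 0) := by
  obtain ⟨hnd, hlen⟩ := mem_S.mp hl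
  have hlen' : (l.map Fin.castSucc).length = m + 1 := by rw [List.length_map, hlen]
  have hdes : des (l.map Fin.castSucc) = des l :=
    des_map _ Fin.strictMono_castSucc l
  have hub : ∀ x ∈ l.map Fin.castSucc, x < Fin.last (m + 1) := by
    intro x hx
    obtain ⟨y, -, rfl⟩ := List.mem_map.mp hx
    exact Fin.castSucc_lt_last y
  have := sum_des_insertIdx_eq (Fin.last (m + 1)) (l.map Fin.castSucc) hub k
  rw [hlen', hdes] at this
  rw [show (∑ p ∈ Finset.range (m + 2), (if des (phi m (l, p)) = k then 1 else 0))
      = ∑ p ∈ Finset.range (m + 1 + 1),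
          (if des ((l.map Fin.castSucc).insertIdx p (Fin.last (m+1))) = k then 1 else 0) from rfl,
    this]
  congr 1
  · rcases eq_or_ne (des l) k with rfl | h
    · simp
    · simp [h, Ne.symm h]
  · exact if_congr eq_comm rfl rfl

lemma sum_bucket (c v : ℕ) :
    (∑ l ∈ S (m + 1), if des l = c then v else 0)
      = v * ((S (m + 1)).filter fun l => des l = c).card := by
  rw [← Finset.sum_filter, Finset.sum_const, smul_eq_mul, mul_comm]

end Rec

lemma eulerian_eq_card (n k : ℕ) :
    eulerian (n + 1) k = ((S (n + 1)).filter fun l => des l = k).card := by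
  have hdes : ∀ σ : Equiv.Perm (Fin (n + 1)), des (List.ofFn ⇑σ) = descentCount σ :=
    fun σ => des_ofFn n ⇑σ
  rw [show eulerian (n + 1) k
      = Fintype.card {σ : Equiv.Perm (Fin (n + 1)) // descentCount σ = k} from rfl,
    Fintype.card_subtype, S, Finset.filter_image,
    Finset.card_image_of_injective _ (ofFn_perm_inj (n+1))]
  congr 1
  refine Finset.filter_congr fun σ _ => ?_
  rw [hdes σ]

lemma descentCount_le {m : ℕ} (σ : Equiv.Perm (Fin (m + 1))) : descentCount σ ≤ m :=
  (Finset.card_filter_le _ _).trans (by simp)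

lemma eulerian_eq_zero {n k : ℕ} (hn : 1 ≤ n) (h : n ≤ k) : eulerian n k = 0 := by
  obtain ⟨m, rfl⟩ : ∃ m, n = m + 1 := ⟨n - 1, by omega⟩
  rw [show eulerian (m + 1) k
      = Fintype.card {σ : Equiv.Perm (Fin (m + 1)) // descentCount σ = k} from rfl]
  refine Fintype.card_eq_zero_iff.mpr ⟨fun ⟨σ, hσ⟩ => ?_⟩
  have := descentCount_le σ
  omega

lemma eulerian_succ_zero (m : ℕ) : eulerian (m + 2) 0 = eulerian (m + 1) 0 := by
  rw [show m + 2 = m + 1 + 1 from rfl, eulerian_eq_card (m + 1) 0, card_filter_S,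
    Finset.sum_congr rfl (fun l hl => inner_sum m l hl 0)]
  have e : ∀ l ∈ S (m + 1),
      ((if des l = 0 then 0 + 1 else 0) + (if des l + 1 = 0 then (m + 1) - des l else 0))
        = (if des l = 0 then 1 else 0) := by
    intro l _
    rw [if_neg (Nat.succ_ne_zero (des l)), add_zero]
  rw [Finset.sum_congr rfl e, sum_bucket, one_mul, eulerian_eq_card]

lemma eulerian_succ_succ (m k : ℕ) :
    eulerian (m + 2) (k + 1)
      = (k + 2) * eulerian (m + 1) (k + 1) + (m + 1 - k) * eulerian (m + 1) k := by
  rw [show m + 2 = m + 1 + 1 from rfl, eulerian_eq_card (m + 1) (k + 1), card_filter_S,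
    Finset.sum_congr rfl (fun l hl => inner_sum m l hl (k + 1)), Finset.sum_add_distrib]
  have e2 : ∀ l ∈ S (m + 1),
      (if des l + 1 = k + 1 then (m + 1) - des l else 0)
        = (if des l = k then (m + 1) - k else 0) := by
    intro l _
    rcases eq_or_ne (des l) k with rfl | h
    · simp
    · rw [if_neg (by omega), if_neg h]
  rw [Finset.sum_congr rfl e2, sum_bucket, sum_bucket, eulerian_eq_card, eulerian_eq_card]

lemma eulerian_zero_right {n : ℕ} (hn : 1 ≤ n) : eulerian n 0 = 1 := by
  induction n with
  | zero => omega
  | succ m ih =>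
    rcases Nat.eq_or_lt_of_le hn with h | h
    · -- m + 1 = 1
      have hm : m = 0 := by omega
      subst hm
      have hall : ∀ σ : Equiv.Perm (Fin 1), descentCount σ = 0 := by
        intro σ
        rw [descentCount]
        simp
      rw [show eulerian 1 0 = Fintype.card {σ : Equiv.Perm (Fin 1) // descentCount σ = 0} from rfl]
      rw [Fintype.card_subtype]
      rw [Finset.filter_true_of_mem (fun σ _ => hall σ), Finset.card_univ]
      simp
    · obtain ⟨m', rfl⟩ : ∃ m', m = m' + 1 := ⟨m - 1, by omega⟩
      rw [eulerian_succ_zero, ih (by omega)]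

/-- The integer recurrence in the form used for power series. -/
lemma eulerian_int_rec (n : ℕ) (hn : 1 ≤ n) (j : ℕ) :
    (eulerian (n + 1) j : ℤ)
      = ((j : ℤ) + 1) * eulerian n j
        + ((n : ℤ) + 1 - j) * (if j = 0 then 0 else (eulerian n (j - 1) : ℤ)) := by
  obtain ⟨m, rfl⟩ : ∃ m, n = m + 1 := ⟨n - 1, by omega⟩
  cases j with
  | zero =>
    simp [eulerian_succ_zero m]
  | succ i =>
    rw [show m + 1 + 1 = m + 2 from rfl, eulerian_succ_succ m i]
    rw [if_neg (Nat.succ_ne_zero i), Nat.add_sub_cancel]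
    rcases le_or_gt i (m + 1) with h | h
    · push_cast [Nat.cast_sub h]
      ring
    · rw [eulerian_eq_zero (by omega) (by omega), eulerian_eq_zero (by omega) (by omega)]
      simp


section Analytic

open PowerSeries

/-- The Eulerian polynomial as a power series. -/
noncomputable def P (n : ℕ) : PowerSeries ℤ :=
  ∑ k ∈ Finset.range n, PowerSeries.C (eulerian n k : ℤ) * PowerSeries.X ^ k

lemma coeff_P {n : ℕ} (hn : 1 ≤ n) (j : ℕ) :
    PowerSeries.coeff j (P n) = (eulerian n j : ℤ) := by
  rw [P, map_sum]
  rw [Finset.sum_congr rfl fun k _ => PowerSeries.coeff_C_mul_X_pow (eulerian n k : ℤ) k j]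
  rw [Finset.sum_ite_eq (Finset.range n) j fun k => (eulerian n k : ℤ)]
  rcases lt_or_ge j n with h | h
  · rw [if_pos (Finset.mem_range.mpr h)]
  · rw [if_neg (by simp [Finset.mem_range]; omega), eulerian_eq_zero hn h]
    simp

lemma derivative_one_sub_X_pow (n : ℕ) :
    d⁄dX ℤ ((1 - X : ℤ⟦X⟧) ^ (n + 1))
      = -(PowerSeries.C ((n : ℤ) + 1) * (1 - X) ^ n) := by
  rw [Derivation.leibniz_pow]
  have h1 : d⁄dX ℤ ((1 : ℤ⟦X⟧) - X) = -1 := by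
    rw [map_sub]
    simp
  rw [h1, Nat.add_sub_cancel, smul_eq_mul, nsmul_eq_mul, ← map_natCast (PowerSeries.C (R := ℤ)) (n + 1)]
  push_cast
  ring

lemma key_rec {n : ℕ} (hn : 1 ≤ n) :
    (1 - X) * (P n + X * d⁄dX ℤ (P n))
        + PowerSeries.C ((n : ℤ) + 1) * (X * P n) = P (n + 1) := by
  have hR : ∀ j : ℕ, PowerSeries.coeff j (P n + X * d⁄dX ℤ (P n))
      = ((j : ℤ) + 1) * (eulerian n j : ℤ) := by
    intro j
    cases j with
    | zero =>
      rw [map_add, coeff_P hn, PowerSeries.coeff_zero_X_mul]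
      push_cast
      ring
    | succ q =>
      rw [map_add, coeff_P hn, PowerSeries.coeff_succ_X_mul, PowerSeries.coeff_derivative,
        coeff_P hn]
      push_cast
      ring
  ext j
  rw [map_add, show ((1 : ℤ⟦X⟧) - X) * (P n + X * d⁄dX ℤ (P n))
      = (P n + X * d⁄dX ℤ (P n)) - X * (P n + X * d⁄dX ℤ (P n)) by ring,
    map_sub, hR j, PowerSeries.coeff_C_mul, coeff_P (by omega : 1 ≤ n + 1) j]
  cases j with
  | zero =>
    rw [PowerSeries.coeff_zero_X_mul, PowerSeries.coeff_zero_X_mul,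
      eulerian_int_rec n hn 0]
    simp
  | succ q =>
    rw [PowerSeries.coeff_succ_X_mul, PowerSeries.coeff_succ_X_mul, hR q,
      eulerian_int_rec n hn (q + 1), if_neg (Nat.succ_ne_zero q), Nat.add_sub_cancel,
      coeff_P hn q]
    push_cast
    ring

lemma mk_pow_succ (n : ℕ) :
    (PowerSeries.mk fun k => (k : ℤ) ^ (n + 1))
      = X * d⁄dX ℤ (PowerSeries.mk fun k => (k : ℤ) ^ n) := by
  ext j
  cases j with
  | zero => simp
  | succ q =>
    rw [PowerSeries.coeff_succ_X_mul, PowerSeries.coeff_derivative, PowerSeries.coeff_mk,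
      PowerSeries.coeff_mk]
    push_cast
    ring

lemma one_sub_X_inv_aux : (PowerSeries.mk fun _ => (1 : ℤ)) * (1 - X) = 1 := by
  have h : (PowerSeries.mk fun _ => (1 : ℤ)) * (1 - X)
      = (PowerSeries.mk fun _ => (1 : ℤ)) - X * (PowerSeries.mk fun _ => (1 : ℤ)) := by ring
  rw [h]
  ext j
  cases j with
  | zero => simp
  | succ q =>
    rw [map_sub, PowerSeries.coeff_succ_X_mul, PowerSeries.coeff_mk, PowerSeries.coeff_mk,
      PowerSeries.coeff_one]
    simp

lemma base_case : (PowerSeries.mk fun k => (k : ℤ)) * (1 - X) ^ 2 = X := by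
  have h1 : (PowerSeries.mk fun k => (k : ℤ)) * (1 - X)
      = X * PowerSeries.mk fun _ => (1 : ℤ) := by
    have h : (PowerSeries.mk fun k => (k : ℤ)) * (1 - X)
        = (PowerSeries.mk fun k => (k : ℤ)) - X * (PowerSeries.mk fun k => (k : ℤ)) := by ring
    rw [h]
    ext j
    cases j with
    | zero => simp
    | succ q =>
      rw [map_sub, PowerSeries.coeff_succ_X_mul, PowerSeries.coeff_succ_X_mul,
        PowerSeries.coeff_mk, PowerSeries.coeff_mk, PowerSeries.coeff_mk]
      push_cast
      ring
  calc (PowerSeries.mk fun k => (k : ℤ)) * (1 - X) ^ 2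
      = ((PowerSeries.mk fun k => (k : ℤ)) * (1 - X)) * (1 - X) := by ring
    _ = X * ((PowerSeries.mk fun _ => (1 : ℤ)) * (1 - X)) := by rw [h1]; ring
    _ = X := by rw [one_sub_X_inv_aux, mul_one]

theorem euler_identity_aux (n : ℕ) (hn : 1 ≤ n) :
    (PowerSeries.mk fun k => (k : ℤ) ^ n) * (1 - X) ^ (n + 1) = X * P n := by
  induction n, hn using Nat.le_induction with
  | base =>
    have e1 : (PowerSeries.mk fun k => (k : ℤ) ^ 1) = PowerSeries.mk fun k => (k : ℤ) := by
      ext j; simp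
    rw [e1, base_case, P]
    rw [Finset.sum_range_one, eulerian_zero_right le_rfl]
    simp
  | succ n hn IH =>
    have hFd := mk_pow_succ n
    have hder := congrArg (d⁄dX ℤ) IH
    rw [Derivation.leibniz, Derivation.leibniz] at hder
    simp only [smul_eq_mul, PowerSeries.derivative_X, mul_one] at hder
    have hG := derivative_one_sub_X_pow n
    have hkey := key_rec hn
    rw [hFd]
    set F := (PowerSeries.mk fun k => (k : ℤ) ^ n) with hF
    set c := PowerSeries.C ((n : ℤ) + 1) with hcdef
    linear_combination (X * (1 - X)) * hder + (c * X) * IH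
      + (-(X * (1 - X) * F)) * hG + X * hkey

end Analytic

theorem euler_identity (n : ℕ) (hn : 1 ≤ n) :
    (PowerSeries.mk fun k => (k : ℤ) ^ n) * (1 - PowerSeries.X) ^ (n + 1) =
      PowerSeries.X *
        ∑ k ∈ Finset.range n, PowerSeries.C (eulerian n k : ℤ) * PowerSeries.X ^ k :=
  euler_identity_aux n hn

end EulerAux

/-- Euler's 1755 identity: `(∑_{k≥0} k^n X^k)·(1-X)^{n+1} = X·∑_{k=0}^{n-1} A(n,k) X^k`
in `ℤ[[X]]`, for `n ≥ 1`. -/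
theorem euler_identity (n : ℕ) (hn : 1 ≤ n) :
    (PowerSeries.mk fun k => (k : ℤ) ^ n) * (1 - PowerSeries.X) ^ (n + 1) =
      PowerSeries.X *
        ∑ k ∈ Finset.range n, PowerSeries.C (eulerian n k : ℤ) * PowerSeries.X ^ k :=
  EulerAux.euler_identity n hn
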